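/- Let G be a graph, M a matching, and suppose u and v are nodes in two vertex-disjoint alternating trees rooted at distinct unmatched roots r_u and r_v, such that u has an even-length alternating path P_u to r_u starting with a matched edge, v has an even-length alternating path P_v to r_v starting with a matched edge, and uv is an edge of G not in M. Then the concatenation reverse(P_u), (u,v), P_v is an M-augmenting path, and augmenting along it yields a matching of size |M| + 1 in which both r_u and r_v become matched. -/

import Mathlib

open Finset

def IsMatchingS {V : Type*} [DecidableEq V] (M : Finset (Sym2 V)) : Prop :=
  (∀ e ∈ M, ¬ e.IsDiag) ∧
  (∀ e ∈ M, ∀ f ∈ M, e ≠ f → ∀ v : V, v ∈ e → v ∉ f)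

def pathEdges {V : Type*} (l : List V) : List (Sym2 V) :=
  List.zipWith (fun a b => s(a, b)) l l.tail

/-- A simple path whose edges lie in `Eg` and alternate w.r.t. the matching `M`;
if `startMatched` is `true` the first edge is matched (edges at even positions are
matched), otherwise the first edge is unmatched. -/
def IsAltPath {V : Type*} [DecidableEq V] (Eg M : Finset (Sym2 V))
    (startMatched : Bool) (l : List V) : Prop :=
  l.Nodup ∧ (∀ e ∈ pathEdges l, e ∈ Eg) ∧
  ∀ i (hi : i < (pathEdges l).length),
    ((pathEdges l)[i]'hi ∈ M ↔ (Even i ↔ startMatched = true))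

/-! Walking along `reverse(P_u), uv, P_v` from `r_u` to `r_v`, the edges alternate unmatched,
matched, …, unmatched: the first half is `P_u` read backwards (even length, so the parities
flip), then the unmatched edge `uv`, then `P_v`. So this is an augmenting path with `2k + 1`
edges, `k` of them matched, and flipping it changes the size by `(k + 1) - k = 1`. The result is
still a matching: an `M`-edge off the path cannot touch the path, because the endpoints are
unmatched and every interior vertex is already covered by a matched path edge; and two unmatched
path edges have even positions, hence are not consecutive, hence share no vertex on the simple
path. -/

open scoped symmDiff

section

variable {V : Type*}

lemma List.countP_eq_length_div_two {α : Type*} (p : α → Bool) (l : List α)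
    (h : ∀ i (hi : i < l.length), p l[i] ↔ Odd i) : l.countP p = l.length / 2 := by
  induction l using List.twoStepInduction with
  | nil => simp
  | singleton a => simpa using h 0
  | cons_cons a b l ih _ =>
    have ha := h 0 (by simp)
    have hb := h 1 (by simp)
    have hl : ∀ i (hi : i < l.length), p l[i] ↔ Odd i := fun i hi => by
      have := h (i + 2) (by simpa)
      simp only [List.getElem_cons_succ] at this
      simpa [Nat.odd_add_one, parity_simps] using this
    simp only [List.getElem_cons_zero, List.getElem_cons_succ] at ha hb
    rw [List.countP_cons_of_neg (by simpa using ha), List.countP_cons_of_pos (by simpa using hb),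
      ih hl, List.length_cons, List.length_cons]
    omega

lemma List.getElem_reverse_append_cons_iff_odd {α : Type*} {p : α → Prop} {A B : List α}
    {e : α} (hA : ∀ i (hi : i < A.length), p A[i] ↔ Even i)
    (hB : ∀ i (hi : i < B.length), p B[i] ↔ Even i) (hAeven : Even A.length) (he : ¬ p e) :
    ∀ i (hi : i < (A.reverse ++ e :: B).length), p (A.reverse ++ e :: B)[i] ↔ Odd i := by
  intro i hi
  rw [List.getElem_append]
  split_ifs with hiA
  · rw [List.getElem_reverse, hA]
    simp only [List.length_reverse] at hiA
    grind
  · simp only [List.length_reverse, not_lt] at hiA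
    obtain ⟨j, rfl⟩ := Nat.exists_eq_add_of_le hiA
    cases j with
    | zero => grind
    | succ j =>
      simp only [List.length_reverse, Nat.add_sub_cancel_left, List.getElem_cons_succ, hB]
      grind

lemma List.head?_reverse_cons_append {α : Type*} (l₁ l₂ : List α) (a : α) :
    ((a :: l₁).reverse ++ l₂).head? = (a :: l₁).getLast? := by
  rw [List.head?_append, List.head?_reverse, List.getLast?_cons, Option.some_or]

lemma length_pathEdges (l : List V) : (pathEdges l).length = l.length - 1 := by
  simp [pathEdges]

lemma getElem_pathEdges (l : List V) (i : ℕ) (hi : i < (pathEdges l).length) :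
    (pathEdges l)[i] =
      s(l[i]'(by grind [length_pathEdges]), l[i + 1]'(by grind [length_pathEdges])) := by
  simp [pathEdges]

lemma mem_getElem_pathEdges_iff {l : List V} {x : V} {i : ℕ}
    (hi : i < (pathEdges l).length) :
    x ∈ (pathEdges l)[i] ↔ ∃ k, ∃ hk : k < l.length, (k = i ∨ k = i + 1) ∧ l[k] = x := by
  rw [getElem_pathEdges, Sym2.mem_iff]
  constructor
  · rintro (rfl | rfl) <;> exact ⟨_, _, by simp, rfl⟩
  · rintro ⟨k, hk, rfl | rfl, rfl⟩ <;> simp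

lemma pathEdges_cons_cons (a b : V) (l : List V) :
    pathEdges (a :: b :: l) = s(a, b) :: pathEdges (b :: l) := rfl

lemma pathEdges_append_cons_cons (l₁ l₂ : List V) (a b : V) :
    pathEdges (l₁ ++ a :: b :: l₂) =
      pathEdges (l₁ ++ [a]) ++ s(a, b) :: pathEdges (b :: l₂) := by
  induction l₁ using List.twoStepInduction with
  | nil => rfl
  | singleton c => rfl
  | cons_cons c d l₁ _ ih =>
    simp only [List.cons_append, pathEdges_cons_cons] at ih ⊢
    rw [ih d]

lemma pathEdges_reverse (l : List V) : pathEdges l.reverse = (pathEdges l).reverse := by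
  induction l using List.twoStepInduction with
  | nil => rfl
  | singleton c => rfl
  | cons_cons a b l _ ih =>
    rw [List.reverse_cons, List.reverse_cons, List.append_assoc, List.singleton_append,
      pathEdges_append_cons_cons, ← List.reverse_cons, ih b, pathEdges_cons_cons]
    simp [Sym2.eq_swap, pathEdges]

lemma pathEdges_reverse_cons_append_cons (l₁ l₂ : List V) (a b : V) :
    pathEdges ((a :: l₁).reverse ++ b :: l₂) =
      (pathEdges (a :: l₁)).reverse ++ s(a, b) :: pathEdges (b :: l₂) := by
  rw [List.reverse_cons, List.append_assoc, List.singleton_append, pathEdges_append_cons_cons,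
    ← List.reverse_cons, pathEdges_reverse]

namespace List.Nodup

variable {l : List V}

lemma eq_or_eq_add_one_of_getElem_mem_pathEdges (hl : l.Nodup) {k i : ℕ} (hk : k < l.length)
    (hi : i < (pathEdges l).length) (h : l[k] ∈ (pathEdges l)[i]) : k = i ∨ k = i + 1 := by
  obtain ⟨k', hk', hk'i, hkk'⟩ := (mem_getElem_pathEdges_iff hi).mp h
  rw [hl.getElem_inj_iff] at hkk'
  omega

lemma le_add_one_of_mem_pathEdges (hl : l.Nodup) {x : V} {i j : ℕ}
    (hi : i < (pathEdges l).length) (hj : j < (pathEdges l).length)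
    (hxi : x ∈ (pathEdges l)[i]) (hxj : x ∈ (pathEdges l)[j]) : i ≤ j + 1 := by
  obtain ⟨k, hk, hki, rfl⟩ := (mem_getElem_pathEdges_iff hi).mp hxi
  have := hl.eq_or_eq_add_one_of_getElem_mem_pathEdges hk hj hxj
  omega

lemma nodup_pathEdges (hl : l.Nodup) : (pathEdges l).Nodup := by
  refine List.nodup_iff_injective_get.mpr fun ⟨i, hi⟩ ⟨j, hj⟩ hij => ?_
  simp only [List.get_eq_getElem, getElem_pathEdges, Fin.mk.injEq] at hij ⊢
  have hi₀ := hl.eq_or_eq_add_one_of_getElem_mem_pathEdges (k := i)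
    (by grind [length_pathEdges]) hj (by simp [getElem_pathEdges, ← hij])
  have hi₁ := hl.eq_or_eq_add_one_of_getElem_mem_pathEdges (k := i + 1)
    (by grind [length_pathEdges]) hj (by simp [getElem_pathEdges, ← hij])
  omega

lemma not_isDiag_of_mem_pathEdges (hl : l.Nodup) {e : Sym2 V} (he : e ∈ pathEdges l) :
    ¬ e.IsDiag := by
  obtain ⟨i, hi, rfl⟩ := List.getElem_of_mem he
  rw [getElem_pathEdges, Sym2.mk_isDiag_iff, hl.getElem_inj_iff]
  omega

end List.Nodup

structure IsAugmentingPath (M : Finset (Sym2 V)) (q : List V) : Prop where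
  nodup : q.Nodup
  mem_iff_odd : ∀ i (hi : i < (pathEdges q).length), (pathEdges q)[i] ∈ M ↔ Odd i
  odd_length : Odd (pathEdges q).length
  head_unmatched : ∀ a ∈ q.head?, ∀ e ∈ M, a ∉ e
  getLast_unmatched : ∀ b ∈ q.getLast?, ∀ e ∈ M, b ∉ e

namespace IsAugmentingPath

variable [DecidableEq V] {M : Finset (Sym2 V)} {q : List V}

lemma mem_pathEdges_of_getElem_mem (hM : IsMatchingS M) (hq : IsAugmentingPath M q)
    {e : Sym2 V} (he : e ∈ M) {k : ℕ} (hk : k < q.length) (hke : q[k] ∈ e) :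
    e ∈ pathEdges q := by
  have hlen := length_pathEdges q
  have hk₀ : k ≠ 0 := by
    rintro rfl
    exact hq.head_unmatched _ (by simp [List.head?_eq_getElem?]) e he hke
  have hk₁ : k ≠ q.length - 1 := by
    rintro rfl
    exact hq.getLast_unmatched _ (by simp [List.getLast?_eq_getElem?]) e he hke
  -- an interior vertex is covered by the matched edge among its two path edges
  obtain ⟨i, hi, hodd, hki⟩ :
      ∃ i, ∃ hi : i < (pathEdges q).length, Odd i ∧ q[k] ∈ (pathEdges q)[i] := by
    rcases Nat.even_or_odd k with hpar | hpar
    · exact ⟨k - 1, by omega, by grind,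
        (mem_getElem_pathEdges_iff _).mpr ⟨k, hk, by omega, rfl⟩⟩
    · exact ⟨k, by omega, hpar, (mem_getElem_pathEdges_iff _).mpr ⟨k, hk, by omega, rfl⟩⟩
  by_contra hnot
  exact hM.2 e he _ ((hq.mem_iff_odd i hi).mpr hodd) (by grind) _ hke hki

lemma notMem_of_mem_of_notMem_pathEdges (hM : IsMatchingS M) (hq : IsAugmentingPath M q) {e f : Sym2 V}
    (he : e ∈ M) (heP : e ∉ pathEdges q) (hf : f ∈ pathEdges q) {x : V} (hxe : x ∈ e) :
    x ∉ f := by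
  intro hxf
  obtain ⟨i, hi, rfl⟩ := List.getElem_of_mem hf
  obtain ⟨k, hk, -, rfl⟩ := (mem_getElem_pathEdges_iff hi).mp hxf
  exact heP (hq.mem_pathEdges_of_getElem_mem hM he hk hxe)

lemma isMatchingS_symmDiff (hM : IsMatchingS M) (hq : IsAugmentingPath M q) :
    IsMatchingS (M ∆ (pathEdges q).toFinset) := by
  simp only [IsMatchingS, Finset.mem_symmDiff, List.mem_toFinset]
  refine ⟨fun e he => he.elim (hM.1 e ·.1) (hq.nodup.not_isDiag_of_mem_pathEdges ·.1), ?_⟩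
  rintro e (⟨heM, heP⟩ | ⟨heP, heM⟩) f (⟨hfM, hfP⟩ | ⟨hfP, hfM⟩) hef x hxe hxf
  · exact hM.2 e heM f hfM hef x hxe hxf
  · exact hq.notMem_of_mem_of_notMem_pathEdges hM heM heP hfP hxe hxf
  · exact hq.notMem_of_mem_of_notMem_pathEdges hM hfM hfP heP hxf hxe
  · obtain ⟨i, hi, rfl⟩ := List.getElem_of_mem heP
    obtain ⟨j, hj, rfl⟩ := List.getElem_of_mem hfP
    have hij := hq.nodup.le_add_one_of_mem_pathEdges hi hj hxe hxf
    have hji := hq.nodup.le_add_one_of_mem_pathEdges hj hi hxf hxe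
    rw [hq.mem_iff_odd, Nat.not_odd_iff_even] at heM hfM
    grind

lemma card_symmDiff (hq : IsAugmentingPath M q) :
    (M ∆ (pathEdges q).toFinset).card = M.card + 1 := by
  set P := (pathEdges q).toFinset
  have hP : P.card = (pathEdges q).length := List.toFinset_card_of_nodup hq.nodup.nodup_pathEdges
  have hMP : (P ∩ M).card = (pathEdges q).length / 2 := by
    have : P ∩ M = ((pathEdges q).filter (· ∈ M)).toFinset := by ext; simp [P]
    rw [this, List.toFinset_card_of_nodup (hq.nodup.nodup_pathEdges.filter _),
      ← List.countP_eq_length_filter]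
    exact List.countP_eq_length_div_two _ _ fun i hi => by simpa using hq.mem_iff_odd i hi
  have hsdiff := Finset.card_sdiff_add_card_inter M P
  have hsdiff' := Finset.card_sdiff_add_card_inter P M
  rw [Finset.inter_comm] at hsdiff
  have hodd := hq.odd_length
  calc (M ∆ P).card = (M \ P).card + (P \ M).card := by
        rw [symmDiff_def, Finset.sup_eq_union, Finset.card_union_of_disjoint disjoint_sdiff_sdiff]
    _ = M.card + 1 := by grind

lemma exists_mem_symmDiff_of_mem_head? (hq : IsAugmentingPath M q) {a : V} (ha : a ∈ q.head?) :
    ∃ e ∈ M ∆ (pathEdges q).toFinset, a ∈ e := by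
  have h0 : 0 < (pathEdges q).length := hq.odd_length.pos
  refine ⟨(pathEdges q)[0], ?_, ?_⟩
  · simp [Finset.mem_symmDiff, hq.mem_iff_odd]
  · rw [Option.mem_def, List.head?_eq_getElem?, List.getElem?_eq_some_iff] at ha
    obtain ⟨_, rfl⟩ := ha
    simp [getElem_pathEdges]

lemma exists_mem_symmDiff_of_mem_getLast? (hq : IsAugmentingPath M q) {b : V}
    (hb : b ∈ q.getLast?) : ∃ e ∈ M ∆ (pathEdges q).toFinset, b ∈ e := by
  have hlen := length_pathEdges q
  have hodd := hq.odd_length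
  refine ⟨(pathEdges q)[(pathEdges q).length - 1]'(by grind), ?_, ?_⟩
  · simp only [Finset.mem_symmDiff, List.mem_toFinset, hq.mem_iff_odd]
    grind
  · rw [Option.mem_def, List.getLast?_eq_getElem?, List.getElem?_eq_some_iff] at hb
    obtain ⟨_, rfl⟩ := hb
    simp only [getElem_pathEdges, Sym2.mem_iff]
    grind

end IsAugmentingPath

lemma IsAltPath.isAugmentingPath_reverse_cons_append_cons [DecidableEq V]
    {Eg M : Finset (Sym2 V)} {u v ru rv : V} {Pu Pv : List V}
    (hPu : IsAltPath Eg M true (u :: Pu)) (hPue : Even Pu.length)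
    (hPul : (u :: Pu).getLast? = some ru) (hru : ∀ e ∈ M, ru ∉ e)
    (hPv : IsAltPath Eg M true (v :: Pv)) (hPve : Even Pv.length)
    (hPvl : (v :: Pv).getLast? = some rv) (hrv : ∀ e ∈ M, rv ∉ e)
    (hdisj : ∀ x ∈ u :: Pu, x ∉ v :: Pv) (huvM : s(u, v) ∉ M) :
    IsAugmentingPath M ((u :: Pu).reverse ++ v :: Pv) where
  nodup := List.nodup_append.mpr ⟨List.nodup_reverse.mpr hPu.1, hPv.1,
    fun x hx y hy hxy => hdisj x (List.mem_reverse.mp hx) (hxy ▸ hy)⟩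
  mem_iff_odd := by
    simp only [pathEdges_reverse_cons_append_cons]
    exact List.getElem_reverse_append_cons_iff_odd (by simpa using hPu.2.2)
      (by simpa using hPv.2.2) (by simpa [length_pathEdges] using hPue) huvM
  odd_length := by
    simp only [length_pathEdges, List.length_append, List.length_reverse, List.length_cons]
    grind
  head_unmatched _ ha := by
    rw [List.head?_reverse_cons_append, hPul] at ha
    exact Option.mem_some_iff.mp ha ▸ hru
  getLast_unmatched _ hb := by
    rw [List.getLast?_append_cons, hPvl] at hb
    exact Option.mem_some_iff.mp hb ▸ hrv

end

theorem augment_update_general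
    {V : Type*} [DecidableEq V]
    (Eg : Finset (Sym2 V))
    (M : Finset (Sym2 V)) (hM : IsMatchingS M)
    (u v ru rv : V) (Pu Pv : List V)
    (hPu : IsAltPath Eg M true Pu) (hPuh : Pu.head? = some u)
    (hPul : Pu.getLast? = some ru) (hPue : Even (Pu.length - 1))
    (hPv : IsAltPath Eg M true Pv) (hPvh : Pv.head? = some v)
    (hPvl : Pv.getLast? = some rv) (hPve : Even (Pv.length - 1))
    -- the two trees (paths) are vertex-disjoint
    (hdisj : ∀ x ∈ Pu, x ∉ Pv)
    -- the roots are unmatched and distinct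
    (hru : ∀ e ∈ M, ru ∉ e) (hrv : ∀ e ∈ M, rv ∉ e)
    -- `uv` is an edge of `G` not in `M`
    (huv : s(u, v) ∈ Eg) (huvM : s(u, v) ∉ M) :
    (fun (q : List V) (M' : Finset (Sym2 V)) =>
      -- `q` is a simple augmenting path: its edges alternate starting and ending
      -- with non-matching edges
      q.Nodup ∧
      (∀ e ∈ pathEdges q, e ∈ Eg) ∧
      (∀ i (hi : i < (pathEdges q).length), ((pathEdges q)[i]'hi ∈ M ↔ Odd i)) ∧
      -- augmenting along `q` gives a matching one larger, covering both roots
      IsMatchingS M' ∧ M'.card = M.card + 1 ∧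
      (∃ e ∈ M', ru ∈ e) ∧ (∃ e ∈ M', rv ∈ e))
    (Pu.reverse ++ Pv)
    ((M \ (pathEdges (Pu.reverse ++ Pv)).toFinset) ∪
      ((pathEdges (Pu.reverse ++ Pv)).toFinset \ M)) := by
  obtain ⟨Pu', rfl⟩ := List.head?_eq_some_iff.mp hPuh
  obtain ⟨Pv', rfl⟩ := List.head?_eq_some_iff.mp hPvh
  have hq : IsAugmentingPath M ((u :: Pu').reverse ++ v :: Pv') :=
    hPu.isAugmentingPath_reverse_cons_append_cons (by simpa using hPue) hPul hru
      hPv (by simpa using hPve) hPvl hrv hdisj huvM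
  refine ⟨hq.nodup, ?_, hq.mem_iff_odd, hq.isMatchingS_symmDiff hM, hq.card_symmDiff,
    hq.exists_mem_symmDiff_of_mem_head? (by rwa [List.head?_reverse_cons_append]),
    hq.exists_mem_symmDiff_of_mem_getLast? (by rwa [List.getLast?_append_cons])⟩
  simp only [pathEdges_reverse_cons_append_cons, List.mem_append, List.mem_reverse, List.mem_cons]
  rintro e (he | rfl | he)
  exacts [hPu.2.1 e he, huv, hPv.2.1 e he]

/-- The Augment primal update: given plus-nodes `u, v` in two vertex-disjoint
alternating trees, joined to their (distinct, unmatched) roots by even-length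
alternating paths starting with matched edges, and a non-matching edge `uv`, the
concatenation `reverse(P_u), (u,v), P_v` is an augmenting path and augmenting along
it produces a matching of size `|M| + 1` covering both roots. -/
theorem augment_update
    {V : Type*} [DecidableEq V]
    (Eg : Finset (Sym2 V)) (hEg : ∀ e ∈ Eg, ¬ e.IsDiag)
    (M : Finset (Sym2 V)) (hM : IsMatchingS M) (hME : M ⊆ Eg)
    (u v ru rv : V) (Pu Pv : List V)
    (hPu : IsAltPath Eg M true Pu) (hPuh : Pu.head? = some u)
    (hPul : Pu.getLast? = some ru) (hPue : Even (Pu.length - 1))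
    (hPv : IsAltPath Eg M true Pv) (hPvh : Pv.head? = some v)
    (hPvl : Pv.getLast? = some rv) (hPve : Even (Pv.length - 1))
    -- the two trees (paths) are vertex-disjoint
    (hdisj : ∀ x ∈ Pu, x ∉ Pv)
    -- the roots are unmatched and distinct
    (hru : ∀ e ∈ M, ru ∉ e) (hrv : ∀ e ∈ M, rv ∉ e) (hroots : ru ≠ rv)
    -- `uv` is an edge of `G` not in `M`
    (huv : s(u, v) ∈ Eg) (huvM : s(u, v) ∉ M) (hune : u ≠ v) :
    (fun (q : List V) (M' : Finset (Sym2 V)) =>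
      -- `q` is a simple augmenting path: its edges alternate starting and ending
      -- with non-matching edges
      q.Nodup ∧
      (∀ e ∈ pathEdges q, e ∈ Eg) ∧
      (∀ i (hi : i < (pathEdges q).length), ((pathEdges q)[i]'hi ∈ M ↔ Odd i)) ∧
      -- augmenting along `q` gives a matching one larger, covering both roots
      IsMatchingS M' ∧ M'.card = M.card + 1 ∧
      (∃ e ∈ M', ru ∈ e) ∧ (∃ e ∈ M', rv ∈ e))
    (Pu.reverse ++ Pv)
    ((M \ (pathEdges (Pu.reverse ++ Pv)).toFinset) ∪
      ((pathEdges (Pu.reverse ++ Pv)).toFinset \ M)) :=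
  augment_update_general Eg M hM u v ru rv Pu Pv hPu hPuh hPul hPue hPv hPvh hPvl hPve hdisj hru hrv
    huv huvM
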